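/- arXiv:2405.09722 — 2 statements merged into one kernel-verified Lean document; each statement's English description precedes it below -/
import Mathlib

section
/- Let φ be a proper virtual endomorphism of a group A, let Γ ≤ Aut(A) with each φ⁻ⁿ(A) invariant under Γ. If (a, γ) ∈ A ⋊ Γ satisfies (a')⁻¹ · a · γ(a') ∈ φ⁻ⁿ(A) for all n ∈ ℕ and all a' ∈ A, then a = 1 and γ = id. -/
/-- The iterated preimages `φ⁻ⁿ(A)` of a virtual endomorphism `φ : B → A` of a group `A`,
viewed as subgroups of `A`: `φ⁻⁰(A) = A` and `φ⁻⁽ⁿ⁺¹⁾(A) = {b ∈ B : φ(b) ∈ φ⁻ⁿ(A)}`. -/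
def iterPre {A : Type*} [Group A] (B : Subgroup A) (φ : B →* A) : ℕ → Subgroup A
  | 0 => ⊤
  | n + 1 => ((iterPre B φ n).comap φ).map B.subtype

/-- Let `φ` be a proper virtual endomorphism of a group `A`, and `Γ ≤ Aut(A)` with each
iterated preimage `φ⁻ⁿ(A)` invariant under `Γ`. If `(a, γ) ∈ A ⋊ Γ` satisfies
`(a')⁻¹ * a * γ(a') ∈ φ⁻ⁿ(A)` for all `n` and all `a'` (i.e., `(a, γ)` fixes every vertex
of the tree of cosets), then `a = 1` and `γ = id`. -/
theorem stmt_7 {A : Type*} [Group A] (B : Subgroup A) [B.FiniteIndex] (φ : B →* A)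
    (hproper : (⨅ n : ℕ, iterPre B φ n) = ⊥)
    (Γ : Subgroup (MulAut A))
    (hstable : ∀ γ ∈ Γ, ∀ n : ℕ, (iterPre B φ n).map γ.toMonoidHom = iterPre B φ n)
    (a : A) (γ : MulAut A) (hγ : γ ∈ Γ)
    (hfix : ∀ (n : ℕ) (a' : A), a'⁻¹ * a * γ a' ∈ iterPre B φ n) :
    a = 1 ∧ γ = 1 := by
  have key : ∀ x : A, (∀ n : ℕ, x ∈ iterPre B φ n) → x = 1 := by
    intro x hx
    have : x ∈ (⨅ n : ℕ, iterPre B φ n) := Subgroup.mem_iInf.2 hx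
    simpa [hproper] using this
  have ha : a = 1 := key a (fun n => by simpa using hfix n 1)
  subst ha
  refine ⟨rfl, ?_⟩
  ext a'
  have : a'⁻¹ * γ a' = 1 := key _ (fun n => by simpa using hfix n a')
  have h2 : γ a' = a' := by
    have := congrArg (a' * ·) this
    simpa [← mul_assoc] using this
  simpa using h2
end

section
/- Let A be a group with a normal subgroup H of finite index. Then A embeds into the wreath product (A/H) ≀ H, where the wreath product is with respect to the left translation action of A/H on itself. -/
/-- The left-translation permutation action of a group `Q` on the direct product `Q → H`
of copies of `H` indexed by `Q`, as a homomorphism `Q →* MulAut (Q → H)`. This is the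
action defining the (unrestricted) wreath product `Q ≀ H = (Q → H) ⋊ Q`. -/
def permMulAut (Q H : Type*) [Group Q] [Group H] : Q →* MulAut (Q → H) where
  toFun q :=
    { toFun := fun f x => f (q⁻¹ * x)
      invFun := fun f x => f (q * x)
      left_inv := fun f => funext fun x => by simp
      right_inv := fun f => funext fun x => by simp
      map_mul' := fun f g => rfl }
  map_one' := by
    ext f x
    simp
  map_mul' q q' := by
    ext f x
    simp [mul_assoc]

/-!
Fix a representative `t x` of each coset `x ∈ A/H`. For `a ∈ A`, the element
`(t x)⁻¹ * a * t (a⁻¹ x)` lies in `H`, and sending `a` to the family of these elements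
together with `aH` is a homomorphism into `(A/H) ≀ H`: the family satisfies the cocycle
identity for the left-translation action. It is injective because the coordinate at the
trivial coset is `(t 1)⁻¹ * a * t (a⁻¹H)`, which, once `aH` is known, determines `a`.
-/

@[simp]
theorem permMulAut_apply {Q H : Type*} [Group Q] [Group H] (q : Q) (f : Q → H) (x : Q) :
    permMulAut Q H q f x = f (q⁻¹ * x) :=
  rfl

namespace KrasnerKaloujnine

open QuotientGroup

variable {A : Type*} [Group A] (H : Subgroup A) [H.Normal]

theorem out_inv_mul_mul_out_mem (a : A) (x : A ⧸ H) :
    x.out⁻¹ * a * ((a : A ⧸ H)⁻¹ * x).out ∈ H := by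
  rw [← eq_one_iff]
  simp only [mk_mul, mk_inv, out_eq']
  group

noncomputable def coord (a : A) (x : A ⧸ H) : H :=
  ⟨x.out⁻¹ * a * ((a : A ⧸ H)⁻¹ * x).out, out_inv_mul_mul_out_mem H a x⟩

theorem coe_coord (a : A) (x : A ⧸ H) :
    (coord H a x : A) = x.out⁻¹ * a * ((a : A ⧸ H)⁻¹ * x).out :=
  rfl

theorem coord_mul (a b : A) (x : A ⧸ H) :
    coord H (a * b) x = coord H a x * coord H b ((a : A ⧸ H)⁻¹ * x) := by
  ext
  simp only [coe_coord, Subgroup.coe_mul, mk_mul, mul_inv_rev]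
  group

noncomputable def embedding : A →* (A ⧸ H → H) ⋊[permMulAut (A ⧸ H) H] (A ⧸ H) :=
  MonoidHom.mk' (fun a => ⟨coord H a, a⟩) fun a b => by
    ext x
    · simp [coord_mul]
    · simp

theorem embedding_injective : Function.Injective (embedding H) := by
  intro a b hab
  have hq : (a : A ⧸ H) = b := congrArg SemidirectProduct.right hab
  have hcoord : (coord H a 1 : A) = coord H b 1 :=
    congrArg (fun z => (z.left 1 : A)) hab
  rw [coe_coord, coe_coord, hq] at hcoord
  exact mul_left_cancel (mul_right_cancel hcoord)

end KrasnerKaloujnine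

theorem stmt_13_general {A : Type*} [Group A] (H : Subgroup A) [H.Normal] :
    ∃ f : A →* ((A ⧸ H → H) ⋊[permMulAut (A ⧸ H) H] (A ⧸ H)),
      Function.Injective f :=
  ⟨KrasnerKaloujnine.embedding H, KrasnerKaloujnine.embedding_injective H⟩

/-- Krasner–Kaloujnine: a group `A` with a normal subgroup `H` of finite index embeds
into the wreath product `(A/H) ≀ H`, where `A/H` acts on `H^(A/H)` by permuting
coordinates via left translation. -/
theorem stmt_13 {A : Type*} [Group A] (H : Subgroup A) [H.Normal] [H.FiniteIndex] :
    ∃ f : A →* ((A ⧸ H → H) ⋊[permMulAut (A ⧸ H) H] (A ⧸ H)),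
      Function.Injective f :=
  stmt_13_general H
end
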